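/- arXiv:1502.02066 — 3 statements merged into one kernel-verified Lean document; each statement's English description precedes it below -/
import Mathlib

section
/- For 1/2 < α < 3/2 and ε > 0, define A_even(s) = (1/2)·[(s²(2+s)² + ε²)^{-α} + (s²(2-s)² + ε²)^{-α}] and A_odd(s) = (1/2)·[(s²(2+s)² + ε²)^{-α} − (s²(2-s)² + ε²)^{-α}]. Then there is a constant C (depending only on α, not on ε) such that |A_even(s)| ≤ C·|s|^{-2α} and |A_odd(s)| ≤ C·|s|^{1-2α} for all s with 0 < |s| ≤ 1/2 and all ε > 0. -/
open Real

private lemma rpow_mvt (α : ℝ) (hα : 0 < α) {x y : ℝ} (hx : 0 < x) (hxy : x ≤ y) :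
    x ^ (-α) - y ^ (-α) ≤ α * x ^ (-α - 1) * (y - x) := by
  rcases eq_or_lt_of_le hxy with h | h
  · simp [h]
  · obtain ⟨c, hc, hderiv⟩ := exists_hasDerivAt_eq_slope (fun t => t ^ (-α))
      (fun t => (-α) * t ^ (-α - 1)) h
      (fun t ht => (Real.continuousAt_rpow_const t (-α)
        (Or.inl (lt_of_lt_of_le hx ht.1).ne')).continuousWithinAt)
      (fun t ht => Real.hasDerivAt_rpow_const (Or.inl (hx.trans ht.1).ne'))
    have hcx : x ≤ c := hc.1.le
    have hc0 : 0 < c := hx.trans hc.1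
    have : x ^ (-α) - y ^ (-α) = α * c ^ (-α - 1) * (y - x) := by
      have hyx : y - x ≠ 0 := sub_ne_zero.mpr h.ne'
      field_simp at hderiv
      nlinarith [hderiv]
    rw [this]
    have hle : c ^ (-α - 1) ≤ x ^ (-α - 1) :=
      Real.rpow_le_rpow_of_nonpos hx hcx (by linarith)
    exact mul_le_mul_of_nonneg_right (mul_le_mul_of_nonneg_left hle hα.le)
      (sub_nonneg.mpr hxy)

private lemma key_diff (α m a b : ℝ) (hα : 0 < α) (hm : 0 < m) (ha : m ≤ a) (hb : m ≤ b) :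
    |a ^ (-α) - b ^ (-α)| ≤ α * m ^ (-α - 1) * |a - b| := by
  have main : ∀ u v : ℝ, m ≤ u → m ≤ v → u ≤ v →
      |u ^ (-α) - v ^ (-α)| ≤ α * m ^ (-α - 1) * |u - v| := by
    intro u v hu hv huv
    have hu0 : 0 < u := hm.trans_le hu
    have hvu : v ^ (-α) ≤ u ^ (-α) := Real.rpow_le_rpow_of_nonpos hu0 huv (by linarith)
    rw [abs_of_nonneg (sub_nonneg.mpr hvu), abs_of_nonpos (by linarith)]
    calc u ^ (-α) - v ^ (-α) ≤ α * u ^ (-α - 1) * (v - u) := rpow_mvt α hα hu0 huv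
      _ ≤ α * m ^ (-α - 1) * (v - u) := by
          have h := Real.rpow_le_rpow_of_nonpos hm hu (show -α - 1 ≤ 0 by linarith)
          exact mul_le_mul_of_nonneg_right (mul_le_mul_of_nonneg_left h hα.le)
            (sub_nonneg.mpr huv)
      _ = α * m ^ (-α - 1) * -(u - v) := by ring
  rcases le_total a b with h | h
  · exact main a b ha hb h
  · rw [abs_sub_comm, abs_sub_comm a b]; exact main b a hb ha h

theorem even_odd_weight_bounds (α : ℝ) (hα : 1 / 2 < α ∧ α < 3 / 2) :
    ∃ C : ℝ, 0 < C ∧ ∀ ε : ℝ, 0 < ε → ∀ s : ℝ, 0 < |s| → |s| ≤ 1 / 2 →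
      (|(1 / 2) * ((s ^ 2 * (2 + s) ^ 2 + ε ^ 2) ^ (-α) + (s ^ 2 * (2 - s) ^ 2 + ε ^ 2) ^ (-α))|
          ≤ C * |s| ^ (-2 * α)) ∧
      (|(1 / 2) * ((s ^ 2 * (2 + s) ^ 2 + ε ^ 2) ^ (-α) - (s ^ 2 * (2 - s) ^ 2 + ε ^ 2) ^ (-α))|
          ≤ C * |s| ^ (1 - 2 * α)) := by
  obtain ⟨hα1, hα2⟩ := hα
  have hα0 : 0 < α := by linarith
  set K : ℝ := ((9:ℝ) / 4) ^ (-α) + 4 * α * ((9:ℝ) / 4) ^ (-α - 1) with hK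
  have hK1 : 0 < ((9:ℝ)/4) ^ (-α) := Real.rpow_pos_of_pos (by norm_num) _
  have hK2 : 0 < ((9:ℝ)/4) ^ (-α - 1) := Real.rpow_pos_of_pos (by norm_num) _
  refine ⟨K, by positivity, ?_⟩
  intro ε hε s hs hs2
  have hs0 : s ≠ 0 := fun h => by simp [h] at hs
  have hsq : 0 < s ^ 2 := by positivity
  have habs : s ^ 2 = |s| ^ 2 := (sq_abs s).symm
  -- lower bound on bases
  have h2p : (3:ℝ)/2 ≤ 2 + s := by cases abs_le.mp hs2 with | intro h1 h2 => linarith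
  have h2m : (3:ℝ)/2 ≤ 2 - s := by cases abs_le.mp hs2 with | intro h1 h2 => linarith
  set m : ℝ := (9/4) * s ^ 2 with hm
  have hm0 : 0 < m := by positivity
  have h1 : (9:ℝ)/4 ≤ (2 + s) ^ 2 := by nlinarith
  have h1' : (9:ℝ)/4 ≤ (2 - s) ^ 2 := by nlinarith
  have hma : m ≤ s ^ 2 * (2 + s) ^ 2 + ε ^ 2 := by
    rw [hm]; nlinarith [mul_le_mul_of_nonneg_left h1 hsq.le, sq_nonneg ε]
  have hmb : m ≤ s ^ 2 * (2 - s) ^ 2 + ε ^ 2 := by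
    rw [hm]; nlinarith [mul_le_mul_of_nonneg_left h1' hsq.le, sq_nonneg ε]
  have ha0 : 0 < s ^ 2 * (2 + s) ^ 2 + ε ^ 2 := hm0.trans_le hma
  have hb0 : 0 < s ^ 2 * (2 - s) ^ 2 + ε ^ 2 := hm0.trans_le hmb
  -- rpow identities for m
  have hmsplit : ∀ p : ℝ, m ^ p = ((9:ℝ)/4) ^ p * |s| ^ (2 * p) := by
    intro p
    rw [hm, habs, Real.mul_rpow (by norm_num) (by positivity)]
    congr 1
    rw [← Real.rpow_natCast |s| 2, ← Real.rpow_mul (abs_nonneg s)]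
    norm_num
  constructor
  · -- even bound
    have hA : (s ^ 2 * (2 + s) ^ 2 + ε ^ 2) ^ (-α) ≤ m ^ (-α) :=
      Real.rpow_le_rpow_of_nonpos hm0 hma (by linarith)
    have hB : (s ^ 2 * (2 - s) ^ 2 + ε ^ 2) ^ (-α) ≤ m ^ (-α) :=
      Real.rpow_le_rpow_of_nonpos hm0 hmb (by linarith)
    have hApos := Real.rpow_pos_of_pos ha0 (-α)
    have hBpos := Real.rpow_pos_of_pos hb0 (-α)
    rw [abs_of_nonneg (by positivity)]
    have hmeq : m ^ (-α) = ((9:ℝ)/4) ^ (-α) * |s| ^ (-2 * α) := by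
      rw [hmsplit (-α)]; ring_nf
    have hpow : 0 < |s| ^ (-2 * α) := Real.rpow_pos_of_pos hs _
    calc (1/2) * ((s ^ 2 * (2 + s) ^ 2 + ε ^ 2) ^ (-α) + (s ^ 2 * (2 - s) ^ 2 + ε ^ 2) ^ (-α))
        ≤ m ^ (-α) := by linarith
      _ = ((9:ℝ)/4) ^ (-α) * |s| ^ (-2 * α) := hmeq
      _ ≤ K * |s| ^ (-2 * α) := by
          have hKle : ((9:ℝ)/4) ^ (-α) ≤ K := by
            have : 0 < 4 * α * ((9:ℝ)/4) ^ (-α - 1) := by positivity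
            rw [hK]; linarith
          exact mul_le_mul_of_nonneg_right hKle hpow.le
  · -- odd bound
    have hdiff := key_diff α m _ _ hα0 hm0 hma hmb
    have habdiff : |(s ^ 2 * (2 + s) ^ 2 + ε ^ 2) - (s ^ 2 * (2 - s) ^ 2 + ε ^ 2)| = 8 * |s| ^ 3 := by
      have : (s ^ 2 * (2 + s) ^ 2 + ε ^ 2) - (s ^ 2 * (2 - s) ^ 2 + ε ^ 2) = 8 * s ^ 3 := by ring
      rw [this, abs_mul, abs_pow]; norm_num
    rw [habdiff] at hdiff
    rw [abs_mul]
    have h12 : |(1:ℝ)/2| = 1/2 := by norm_num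
    rw [h12]
    have hmeq : m ^ (-α - 1) = ((9:ℝ)/4) ^ (-α - 1) * |s| ^ (2 * (-α - 1)) := hmsplit _
    have hcollect : |s| ^ (2 * (-α - 1)) * |s| ^ 3 = |s| ^ (1 - 2 * α) := by
      rw [show (|s|:ℝ) ^ 3 = |s| ^ ((3:ℕ):ℝ) from (Real.rpow_natCast _ 3).symm,
        ← Real.rpow_add hs]
      norm_num
      ring_nf
    have hpow1 : 0 < |s| ^ (1 - 2 * α) := Real.rpow_pos_of_pos hs _
    calc (1/2) * |(s ^ 2 * (2 + s) ^ 2 + ε ^ 2) ^ (-α) - (s ^ 2 * (2 - s) ^ 2 + ε ^ 2) ^ (-α)|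
        ≤ (1/2) * (α * m ^ (-α - 1) * (8 * |s| ^ 3)) := by linarith
      _ = 4 * α * ((9:ℝ)/4) ^ (-α - 1) * (|s| ^ (2 * (-α - 1)) * |s| ^ 3) := by
          rw [hmeq]; ring
      _ = 4 * α * ((9:ℝ)/4) ^ (-α - 1) * |s| ^ (1 - 2 * α) := by rw [hcollect]
      _ ≤ K * |s| ^ (1 - 2 * α) := by
          have hKle : 4 * α * ((9:ℝ)/4) ^ (-α - 1) ≤ K := by rw [hK]; linarith
          exact mul_le_mul_of_nonneg_right hKle hpow1.le
end

section
/- Let 1/2 < α < 3/2, ε > 0, and x ∈ ℝ. Then ∫_{-1/2}^{1/2} (s²(2+s)² + ε²)^{-α} · min(s²(1+|x|)², 1) ds ≤ C_α (1+|x|)^{2α-1}, with C_α independent of ε and x. -/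
open Real MeasureTheory

private lemma aux_core (α : ℝ) (hα1 : 1 / 2 < α) (hα2 : α < 3 / 2) (M : ℝ) (hM : 1 ≤ M)
    (h : ℝ → ℝ) (hint : IntegrableOn h (Set.Ioc 0 (1 / 2)))
    (hbound : ∀ s ∈ Set.Ioc (0 : ℝ) (1 / 2), h s ≤ s ^ (-(2 * α)) * min (s ^ 2 * M ^ 2) 1) :
    ∫ s in (0 : ℝ)..(1 / 2), h s ≤
      (1 / (3 - 2 * α) + 1 / (2 * α - 1)) * M ^ (2 * α - 1) := by
  have hM0 : (0 : ℝ) < M := lt_of_lt_of_le one_pos hM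
  set c : ℝ := M⁻¹ with hc
  have hc0 : 0 < c := inv_pos.2 hM0
  set G1 : ℝ → ℝ := fun s => M ^ 2 * s ^ (2 - 2 * α) with hG1
  set G2 : ℝ → ℝ := fun s => s ^ (-(2 * α)) with hG2
  have hG1int : IntegrableOn G1 (Set.Ioc 0 c) := by
    have h1 : IntervalIntegrable (fun s : ℝ => s ^ (2 - 2 * α)) volume 0 c :=
      intervalIntegral.intervalIntegrable_rpow' (by linarith)
    have := (intervalIntegrable_iff_integrableOn_Ioc_of_le hc0.le).1 h1
    exact this.const_mul _
  have hG2int : IntegrableOn G2 (Set.Ioi c) :=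
    integrableOn_Ioi_rpow_of_lt (by linarith) hc0
  set g : ℝ → ℝ := fun s =>
    Set.indicator (Set.Ioc 0 c) G1 s + Set.indicator (Set.Ioi c) G2 s with hg
  have hgint : Integrable g := by
    refine Integrable.add ?_ ?_
    · exact (integrable_indicator_iff measurableSet_Ioc).2 hG1int
    · exact (integrable_indicator_iff measurableSet_Ioi).2 hG2int
  have hG1nn : ∀ s, 0 ≤ Set.indicator (Set.Ioc 0 c) G1 s := by
    intro s
    refine Set.indicator_nonneg (fun t ht => ?_) s
    exact mul_nonneg (sq_nonneg M) (rpow_nonneg ht.1.le _)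
  have hG2nn : ∀ s, 0 ≤ Set.indicator (Set.Ioi c) G2 s := by
    intro s
    refine Set.indicator_nonneg (fun t ht => ?_) s
    exact rpow_nonneg (hc0.trans ht).le _
  have hmono : ∀ s ∈ Set.Ioc (0 : ℝ) (1 / 2), h s ≤ g s := by
    intro s hs
    have hs0 : 0 < s := hs.1
    have hb := hbound s hs
    by_cases hsc : s ≤ c
    · have h1 : Set.indicator (Set.Ioc 0 c) G1 s = G1 s :=
        Set.indicator_of_mem (Set.mem_Ioc.2 ⟨hs0, hsc⟩) _
      have e : s ^ (-(2 * α)) * s ^ (2 : ℕ) = s ^ (2 - 2 * α) := by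
        rw [← Real.rpow_natCast s 2, ← Real.rpow_add hs0]
        congr 1
        push_cast; ring
      have key : s ^ (-(2 * α)) * min (s ^ 2 * M ^ 2) 1 ≤ G1 s := by
        have h2 : s ^ (-(2 * α)) * (s ^ 2 * M ^ 2) = G1 s := by
          rw [hG1]; dsimp only; rw [← e]; ring
        calc s ^ (-(2 * α)) * min (s ^ 2 * M ^ 2) 1
            ≤ s ^ (-(2 * α)) * (s ^ 2 * M ^ 2) :=
              mul_le_mul_of_nonneg_left (min_le_left _ _) (rpow_nonneg hs0.le _)
          _ = G1 s := h2
      calc h s ≤ s ^ (-(2 * α)) * min (s ^ 2 * M ^ 2) 1 := hb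
        _ ≤ G1 s := key
        _ ≤ g s := by rw [hg]; dsimp only; rw [h1]; linarith [hG2nn s]
    · push_neg at hsc
      have h2 : Set.indicator (Set.Ioi c) G2 s = G2 s :=
        Set.indicator_of_mem (Set.mem_Ioi.2 hsc) _
      calc h s ≤ s ^ (-(2 * α)) * min (s ^ 2 * M ^ 2) 1 := hb
        _ ≤ s ^ (-(2 * α)) * 1 :=
            mul_le_mul_of_nonneg_left (min_le_right _ _) (rpow_nonneg hs0.le _)
        _ = G2 s := by rw [mul_one]
        _ ≤ g s := by rw [hg]; dsimp only; rw [h2]; linarith [hG1nn s]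
  have hgnn : 0 ≤ᵐ[volume] g := Filter.Eventually.of_forall
    (fun s => add_nonneg (hG1nn s) (hG2nn s))
  have e1 : ∫ s in Set.Ioc (0 : ℝ) c, G1 s = (1 / (3 - 2 * α)) * M ^ (2 * α - 1) := by
    have h0 : ∫ s in Set.Ioc (0 : ℝ) c, G1 s = ∫ s in (0 : ℝ)..c, G1 s :=
      (intervalIntegral.integral_of_le hc0.le).symm
    rw [h0, hG1]
    rw [intervalIntegral.integral_const_mul]
    rw [integral_rpow (Or.inl (by linarith))]
    rw [Real.zero_rpow (by intro hcon; linarith : (2 - 2 * α + 1 : ℝ) ≠ 0)]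
    have hcpow : c ^ (2 - 2 * α + 1) = M ^ (2 * α - 3) := by
      rw [hc, Real.inv_rpow hM0.le, ← Real.rpow_neg hM0.le]
      congr 1; ring
    rw [hcpow]
    have hMpow : M ^ (2 : ℕ) * M ^ (2 * α - 3) = M ^ (2 * α - 1) := by
      rw [← Real.rpow_natCast M 2, ← Real.rpow_add hM0]
      congr 1; push_cast; ring
    field_simp
    rw [← hMpow]
    ring
  have e2 : ∫ s in Set.Ioi c, G2 s = (1 / (2 * α - 1)) * M ^ (2 * α - 1) := by
    rw [hG2]
    rw [integral_Ioi_rpow_of_lt (by linarith) hc0]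
    have hcpow : c ^ (-(2 * α) + 1) = M ^ (2 * α - 1) := by
      rw [hc, Real.inv_rpow hM0.le, ← Real.rpow_neg hM0.le]
      congr 1; ring
    rw [hcpow]
    have hne1 : (2 * α - 1 : ℝ) ≠ 0 := by intro hcon; linarith
    have hne2 : (-(2 * α) + 1 : ℝ) ≠ 0 := by intro hcon; linarith
    field_simp
    ring
  calc ∫ s in (0 : ℝ)..(1 / 2), h s
      = ∫ s in Set.Ioc (0 : ℝ) (1 / 2), h s := intervalIntegral.integral_of_le (by norm_num)
    _ ≤ ∫ s in Set.Ioc (0 : ℝ) (1 / 2), g s :=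
        setIntegral_mono_on hint hgint.integrableOn measurableSet_Ioc hmono
    _ ≤ ∫ s, g s := setIntegral_le_integral hgint hgnn
    _ = (∫ s in Set.Ioc (0 : ℝ) c, G1 s) + ∫ s in Set.Ioi c, G2 s := by
        simp only [hg]
        rw [integral_add ((integrable_indicator_iff measurableSet_Ioc).2 hG1int)
          ((integrable_indicator_iff measurableSet_Ioi).2 hG2int)]
        rw [integral_indicator measurableSet_Ioc, integral_indicator measurableSet_Ioi]
    _ = (1 / (3 - 2 * α) + 1 / (2 * α - 1)) * M ^ (2 * α - 1) := by
        rw [e1, e2]; ring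

theorem even_part_integral_bound (α : ℝ) (hα : 1 / 2 < α ∧ α < 3 / 2) :
    ∃ C : ℝ, 0 < C ∧ ∀ ε : ℝ, 0 < ε → ∀ x : ℝ,
      ∫ s in (-(1 / 2) : ℝ)..(1 / 2),
          (s ^ 2 * (2 + s) ^ 2 + ε ^ 2) ^ (-α) * min (s ^ 2 * (1 + |x|) ^ 2) 1
        ≤ C * (1 + |x|) ^ (2 * α - 1) := by
  obtain ⟨hα1, hα2⟩ := hα
  refine ⟨2 * (1 / (3 - 2 * α) + 1 / (2 * α - 1)),
    mul_pos two_pos (add_pos (div_pos one_pos (by linarith)) (div_pos one_pos (by linarith))),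
    ?_⟩
  intro ε hε x
  set M : ℝ := 1 + |x| with hMdef
  have hM : 1 ≤ M := le_add_of_nonneg_right (abs_nonneg x)
  have hM0 : (0 : ℝ) < M := lt_of_lt_of_le one_pos hM
  set f : ℝ → ℝ := fun s => (s ^ 2 * (2 + s) ^ 2 + ε ^ 2) ^ (-α) * min (s ^ 2 * M ^ 2) 1
    with hf
  have hfc : Continuous f := by
    apply Continuous.mul
    · apply Continuous.rpow_const
      · continuity
      · intro s
        left
        positivity
    · exact (Continuous.min (by continuity) continuous_const)
  -- generic pointwise bound
  have hbd : ∀ s : ℝ, 0 < s → s ≤ 1 / 2 → ∀ b : ℝ, 1 ≤ b ^ 2 →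
      (s ^ 2 * b ^ 2 + ε ^ 2) ^ (-α) * min (s ^ 2 * M ^ 2) 1
        ≤ s ^ (-(2 * α)) * min (s ^ 2 * M ^ 2) 1 := by
    intro s hs0 hs12 b hb
    have hs2 : (0 : ℝ) < s ^ 2 := by positivity
    have hle : s ^ 2 ≤ s ^ 2 * b ^ 2 + ε ^ 2 := by nlinarith [sq_nonneg ε, sq_nonneg s]
    have h1 : (s ^ 2 * b ^ 2 + ε ^ 2) ^ (-α) ≤ (s ^ 2) ^ (-α) :=
      Real.rpow_le_rpow_of_nonpos hs2 hle (by linarith)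
    have h2 : (s ^ 2 : ℝ) ^ (-α) = s ^ (-(2 * α)) := by
      rw [← Real.rpow_natCast s 2, ← Real.rpow_mul hs0.le]
      congr 1; push_cast; ring
    rw [← h2]
    exact mul_le_mul_of_nonneg_right h1 (le_min (by positivity) zero_le_one)
  -- apply aux_core to the two halves
  have hI1 : IntervalIntegrable f volume (-(1 / 2)) 0 := hfc.intervalIntegrable _ _
  have hI2 : IntervalIntegrable f volume 0 (1 / 2) := hfc.intervalIntegrable _ _
  have hpos : ∫ s in (0 : ℝ)..(1 / 2), f s ≤
      (1 / (3 - 2 * α) + 1 / (2 * α - 1)) * M ^ (2 * α - 1) := by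
    refine aux_core α hα1 hα2 M hM f (hfc.integrableOn_Ioc) ?_
    intro s hs
    exact hbd s hs.1 hs.2 (2 + s) (by nlinarith [hs.1.le])
  have hneg : ∫ s in (0 : ℝ)..(1 / 2), f (-s) ≤
      (1 / (3 - 2 * α) + 1 / (2 * α - 1)) * M ^ (2 * α - 1) := by
    refine aux_core α hα1 hα2 M hM (fun s => f (-s))
      ((hfc.comp continuous_neg).integrableOn_Ioc) ?_
    intro s hs
    show f (-s) ≤ s ^ (-(2 * α)) * min (s ^ 2 * M ^ 2) 1
    have he : f (-s) = (s ^ 2 * (2 - s) ^ 2 + ε ^ 2) ^ (-α) * min (s ^ 2 * M ^ 2) 1 := by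
      simp only [hf]
      rw [neg_sq]
      ring_nf
    rw [he]
    exact hbd s hs.1 hs.2 (2 - s) (by nlinarith [hs.1.le, hs.2])
  have hsplit : (∫ s in (-(1 / 2) : ℝ)..(1 / 2), f s) =
      (∫ s in (-(1 / 2) : ℝ)..0, f s) + ∫ s in (0 : ℝ)..(1 / 2), f s :=
    (intervalIntegral.integral_add_adjacent_intervals hI1 hI2).symm
  have hflip : (∫ s in (-(1 / 2) : ℝ)..0, f s) = ∫ s in (0 : ℝ)..(1 / 2), f (-s) := by
    rw [intervalIntegral.integral_comp_neg (a := (0:ℝ)) (b := 1/2) f]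
    norm_num
  calc ∫ s in (-(1 / 2) : ℝ)..(1 / 2),
        (s ^ 2 * (2 + s) ^ 2 + ε ^ 2) ^ (-α) * min (s ^ 2 * (1 + |x|) ^ 2) 1
      = (∫ s in (0 : ℝ)..(1 / 2), f (-s)) + ∫ s in (0 : ℝ)..(1 / 2), f s := by
        rw [← hflip, ← hsplit]
    _ ≤ (1 / (3 - 2 * α) + 1 / (2 * α - 1)) * M ^ (2 * α - 1) +
        (1 / (3 - 2 * α) + 1 / (2 * α - 1)) * M ^ (2 * α - 1) := add_le_add hneg hpos
    _ = 2 * (1 / (3 - 2 * α) + 1 / (2 * α - 1)) * (1 + |x|) ^ (2 * α - 1) := by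
        rw [hMdef]; ring
end

section
/- Let 1/2 < α < 3/2. Then the function ε ↦ ∫_{1/2}^{3/2} ((1-r²)² + ε²)^{-α} dr − C_α ε^{1-2α} is bounded as ε → 0⁺, where C_α = ∫_{-∞}^{∞} (4t² + 1)^{-α} dt; in particular ∫_{1/2}^{3/2} ((1-r²)² + ε²)^{-α} dr = C_α ε^{1-2α} + O(1) uniformly for ε ∈ (0,1]. -/
/-!
Substituting `v = (r ^ 2 - 1) / 2` turns the integral into
`∫ v in -3/8..5/8, (4 v² + ε²)^(-α) (1 + 2 v)^(-1/2)`, and scaling `v = ε t` gives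
`∫ v, (4 v² + ε²)^(-α) = C_α ε^(1 - 2α)`. Near `v = 0` the weight is `1 - v + O(v²)`: the
linear term integrates to zero against the even kernel over `[-3/8, 3/8]`, and since the kernel
is at most `(4 v²)^(-α)`, the remainder is dominated by `|v|^(2 - 2α)`, integrable because
`α < 3/2`. Away from `v = 0` the kernel is bounded uniformly in `ε`, with tails integrable
because `α > 1/2`.
-/

open MeasureTheory intervalIntegral

open Set Real

theorem intervalIntegrable_abs_rpow {r : ℝ} (hr : -1 < r) (a b : ℝ) :
    IntervalIntegrable (fun v : ℝ => |v| ^ r) volume a b := by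
  have hpos : ∀ c, 0 ≤ c → IntervalIntegrable (fun v : ℝ => |v| ^ r) volume 0 c :=
    fun c hc => (intervalIntegrable_rpow' hr).congr fun v hv => by
      rw [uIoc_of_le hc] at hv; simp [abs_of_pos hv.1]
  have hall : ∀ c, IntervalIntegrable (fun v : ℝ => |v| ^ r) volume 0 c := fun c => by
    rcases le_total 0 c with hc | hc
    · exact hpos c hc
    · rw [IntervalIntegrable.iff_comp_neg (by simp)]
      simpa using hpos (-c) (by linarith)
  exact (hall a).symm.trans (hall b)

theorem integral_mul_self_eq_zero_of_even {g : ℝ → ℝ} (hg : ∀ v, g (-v) = g v) (a : ℝ) :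
    ∫ v in -a..a, g v * v = 0 := by
  have h := integral_comp_neg (a := -a) (b := a) fun v => g v * v
  simp only [hg, mul_neg, intervalIntegral.integral_neg, neg_neg] at h
  linarith

theorem integral_sub_intervalIntegral_eq_of_even {g : ℝ → ℝ} (hg : Integrable g)
    (heven : ∀ v, g (-v) = g v) {a : ℝ} (ha : 0 ≤ a) :
    (∫ v, g v) - ∫ v in -a..a, g v = 2 * ∫ v in Ioi a, g v := by
  have hleft : ∫ v in Iic (-a), g v = ∫ v in Ioi a, g v := by
    simpa [heven] using integral_comp_neg_Iic (-a) g
  rw [← integral_Iic_add_Ioi hg.integrableOn hg.integrableOn (b := -a),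
    ← Ioc_union_Ioi_eq_Ioi (by linarith : -a ≤ a),
    setIntegral_union (Ioc_disjoint_Ioi le_rfl) measurableSet_Ioi hg.integrableOn hg.integrableOn,
    integral_of_le (by linarith), hleft]
  ring

theorem continuousOn_inv_sqrt_one_add_two_mul :
    ContinuousOn (fun v : ℝ => (√(1 + 2 * v))⁻¹) (Ioi (-(1 / 2))) :=
  (continuous_sqrt.comp (by fun_prop)).continuousOn.inv₀ fun v (hv : -(1 / 2) < v) =>
    (sqrt_pos.mpr (by linarith)).ne'

theorem integral_comp_sq_sub_one_div_two {g : ℝ → ℝ} (hg : Continuous g) {a b : ℝ}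
    (ha : 0 < a) (hab : a ≤ b) :
    ∫ r in a..b, g ((r ^ 2 - 1) / 2)
      = ∫ v in (a ^ 2 - 1) / 2..(b ^ 2 - 1) / 2, g v * (√(1 + 2 * v))⁻¹ := by
  have hpos : ∀ r ∈ uIcc a b, 0 < r := fun r hr => by
    rw [uIcc_of_le hab] at hr; exact ha.trans_le hr.1
  have hsubst := integral_deriv_smul_comp' (a := a) (b := b)
    (f := fun r : ℝ => (r ^ 2 - 1) / 2) (f' := id) (g := fun v => g v * (√(1 + 2 * v))⁻¹)
    (fun r _ => by simpa using ((hasDerivAt_pow 2 r).sub_const 1).div_const 2)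
    continuousOn_id
    (hg.continuousOn.mul (continuousOn_inv_sqrt_one_add_two_mul.mono ?_))
  · rw [← hsubst]
    refine integral_congr fun r hr => ?_
    have hr2 : 1 + 2 * ((r ^ 2 - 1) / 2) = r ^ 2 := by ring
    simp only [Function.comp, smul_eq_mul, id, hr2, sqrt_sq (hpos r hr).le]
    field_simp [(hpos r hr).ne']
  · rintro _ ⟨r, hr, rfl⟩
    have := hpos r hr
    simp only [mem_Ioi]
    nlinarith

theorem abs_inv_sqrt_one_add_two_mul_sub_one_add_le {v : ℝ} (hv : -(3 / 8) ≤ v) :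
    |(√(1 + 2 * v))⁻¹ - 1 + v| ≤ 8 * v ^ 2 := by
  set s := √(1 + 2 * v)
  have hs : s ^ 2 = 1 + 2 * v := sq_sqrt (by linarith)
  have hs_half : 1 / 2 ≤ s := le_sqrt_of_sq_le (by linarith)
  have hkey : s⁻¹ - 1 + v = (s - 1) ^ 2 * (s + 2) / (2 * s) := by
    field_simp
    linear_combination (-s) * hs
  have hv2 : 8 * v ^ 2 = 2 * (s - 1) ^ 2 * (s + 1) ^ 2 := by
    linear_combination (-2 * (s ^ 2 - 1 + 2 * v)) * hs
  rw [hkey, hv2, abs_of_nonneg (by positivity), div_le_iff₀ (by positivity)]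
  have : s + 2 ≤ 2 * (s + 1) ^ 2 * (2 * s) := by nlinarith
  nlinarith [sq_nonneg (s - 1)]

section

variable {α ε : ℝ}

theorem continuous_rpow_neg_four_mul_sq_add_sq (hε : ε ≠ 0) :
    Continuous fun v : ℝ => (4 * v ^ 2 + ε ^ 2) ^ (-α) :=
  (by fun_prop : Continuous fun v : ℝ => 4 * v ^ 2 + ε ^ 2).rpow_const
    fun _ => Or.inl (by positivity)

theorem rpow_neg_four_mul_sq_add_sq_le (hα : 0 ≤ α) {v : ℝ} (hv : v ≠ 0) :
    (4 * v ^ 2 + ε ^ 2) ^ (-α) ≤ 4 ^ (-α) * |v| ^ (-(2 * α)) :=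
  calc (4 * v ^ 2 + ε ^ 2) ^ (-α) ≤ (4 * |v| ^ 2) ^ (-α) :=
        rpow_le_rpow_of_nonpos (by positivity) (by rw [sq_abs]; nlinarith [sq_nonneg ε])
          (by linarith)
    _ = 4 ^ (-α) * |v| ^ (-(2 * α)) := by
        rw [mul_rpow (by norm_num) (by positivity), ← rpow_natCast, ← rpow_mul (abs_nonneg v)]
        norm_num

theorem rpow_neg_four_mul_sq_add_sq_eq_mul_div (hε : 0 < ε) (v : ℝ) :
    (4 * v ^ 2 + ε ^ 2) ^ (-α) = ε ^ (-(2 * α)) * (4 * (v / ε) ^ 2 + 1) ^ (-α) := by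
  rw [show 4 * v ^ 2 + ε ^ 2 = ε ^ 2 * (4 * (v / ε) ^ 2 + 1) by field_simp,
    mul_rpow (by positivity) (by positivity), ← rpow_natCast, ← rpow_mul hε.le]
  norm_num

theorem integrable_rpow_neg_four_mul_sq_add_one (hα : 1 / 2 < α) :
    Integrable (fun t : ℝ => (4 * t ^ 2 + 1) ^ (-α)) := by
  have h := (integrable_rpow_neg_one_add_norm_sq (E := ℝ) (μ := volume)
    (r := 2 * α) (by simp; linarith)).comp_mul_left' (two_ne_zero (α := ℝ))
  refine h.congr (Filter.Eventually.of_forall fun t => ?_)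
  simp only [norm_mul, Real.norm_eq_abs, abs_two, mul_pow, sq_abs]
  congr 1 <;> ring

theorem integrable_rpow_neg_four_mul_sq_add_sq (hα : 1 / 2 < α) (hε : 0 < ε) :
    Integrable (fun v : ℝ => (4 * v ^ 2 + ε ^ 2) ^ (-α)) := by
  simp_rw [rpow_neg_four_mul_sq_add_sq_eq_mul_div hε]
  exact ((integrable_rpow_neg_four_mul_sq_add_one hα).comp_div hε.ne').const_mul _

theorem integral_rpow_neg_four_mul_sq_add_sq (hε : 0 < ε) :
    ∫ v : ℝ, (4 * v ^ 2 + ε ^ 2) ^ (-α)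
      = (∫ t : ℝ, (4 * t ^ 2 + 1) ^ (-α)) * ε ^ (1 - 2 * α) := by
  simp_rw [rpow_neg_four_mul_sq_add_sq_eq_mul_div hε]
  rw [MeasureTheory.integral_const_mul,
    Measure.integral_comp_div (fun t : ℝ => (4 * t ^ 2 + 1) ^ (-α)),
    abs_of_pos hε, smul_eq_mul, sub_eq_neg_add, rpow_add hε, rpow_one]
  ring

theorem integral_rpow_neg_one_sub_sq_sq_add_sq (hε : ε ≠ 0) :
    ∫ r in (1 / 2 : ℝ)..(3 / 2), ((1 - r ^ 2) ^ 2 + ε ^ 2) ^ (-α)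
      = ∫ v in (-(3 / 8) : ℝ)..(5 / 8),
          (4 * v ^ 2 + ε ^ 2) ^ (-α) * (√(1 + 2 * v))⁻¹ := by
  have h := integral_comp_sq_sub_one_div_two (continuous_rpow_neg_four_mul_sq_add_sq
    (α := α) hε) (a := 1 / 2) (b := 3 / 2) (by norm_num) (by norm_num)
  convert h using 1
  · exact integral_congr fun r _ => by ring_nf
  · norm_num

theorem norm_rpow_neg_four_mul_sq_add_sq_mul_le (hα : 0 ≤ α) {v : ℝ} (hv : -(3 / 8) ≤ v) :
    ‖(4 * v ^ 2 + ε ^ 2) ^ (-α) * ((√(1 + 2 * v))⁻¹ - 1 + v)‖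
      ≤ 8 * 4 ^ (-α) * |v| ^ (2 - 2 * α) := by
  rcases eq_or_ne v 0 with rfl | hv0
  · norm_num
    positivity
  rw [norm_mul, norm_of_nonneg (rpow_nonneg (by positivity) _), Real.norm_eq_abs]
  calc _ ≤ 4 ^ (-α) * |v| ^ (-(2 * α)) * (8 * |v| ^ (2 : ℝ)) :=
        mul_le_mul (rpow_neg_four_mul_sq_add_sq_le hα hv0)
          (by rw [rpow_two, sq_abs]; exact abs_inv_sqrt_one_add_two_mul_sub_one_add_le hv)
          (abs_nonneg _) (by positivity)
    _ = 8 * 4 ^ (-α) * |v| ^ (2 - 2 * α) := by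
        rw [sub_eq_neg_add, rpow_add (abs_pos.mpr hv0)]
        ring

theorem abs_integral_rpow_neg_four_mul_sq_add_sq_mul_le (hα : 0 ≤ α) (hα' : α < 3 / 2) :
    |∫ v in (-(3 / 8) : ℝ)..(3 / 8),
        (4 * v ^ 2 + ε ^ 2) ^ (-α) * ((√(1 + 2 * v))⁻¹ - 1 + v)|
      ≤ ∫ v in (-(3 / 8) : ℝ)..(3 / 8), 8 * 4 ^ (-α) * |v| ^ (2 - 2 * α) :=
  intervalIntegral.norm_integral_le_of_norm_le (by norm_num)
    (ae_of_all _ fun _ hv => norm_rpow_neg_four_mul_sq_add_sq_mul_le hα hv.1.le)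
    ((intervalIntegrable_abs_rpow (by linarith) _ _).const_mul _)

theorem abs_integral_rpow_neg_four_mul_sq_add_sq_mul_inv_sqrt_le (hα : 0 ≤ α) {a b : ℝ}
    (ha : 0 < a) (hab : a ≤ b) :
    |∫ v in a..b, (4 * v ^ 2 + ε ^ 2) ^ (-α) * (√(1 + 2 * v))⁻¹|
      ≤ (4 * a ^ 2) ^ (-α) * (b - a) := by
  rw [← abs_of_nonneg (sub_nonneg.mpr hab), ← Real.norm_eq_abs]
  refine intervalIntegral.norm_integral_le_of_norm_le_const fun v hv => ?_
  rw [uIoc_of_le hab] at hv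
  have hv0 : 0 < v := ha.trans hv.1
  rw [norm_mul, norm_of_nonneg (rpow_nonneg (by positivity) _), norm_of_nonneg (by positivity),
    ← mul_one ((4 * a ^ 2) ^ (-α))]
  exact mul_le_mul
    (rpow_le_rpow_of_nonpos (by positivity) (by nlinarith [sq_nonneg ε, hv.1]) (by linarith))
    (inv_le_one_of_one_le₀ (one_le_sqrt.mpr (by linarith))) (by positivity) (by positivity)

theorem abs_integral_sub_intervalIntegral_rpow_neg_four_mul_sq_add_sq_le (hα : 1 / 2 < α)
    (hε : 0 < ε) {a : ℝ} (ha : 0 < a) :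
    |(∫ v, (4 * v ^ 2 + ε ^ 2) ^ (-α)) - ∫ v in -a..a, (4 * v ^ 2 + ε ^ 2) ^ (-α)|
      ≤ 2 * ∫ v in Ioi a, 4 ^ (-α) * v ^ (-(2 * α)) := by
  have hint := integrable_rpow_neg_four_mul_sq_add_sq hα hε
  rw [integral_sub_intervalIntegral_eq_of_even hint (fun v => by rw [neg_sq]) ha.le,
    abs_of_nonneg (mul_nonneg zero_le_two
      (setIntegral_nonneg measurableSet_Ioi fun _ _ => by positivity))]
  refine mul_le_mul_of_nonneg_left (setIntegral_mono_on hint.integrableOn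
    ((integrableOn_Ioi_rpow_of_lt (a := -(2 * α)) (by linarith) ha).const_mul _)
    measurableSet_Ioi fun v hv => ?_) zero_le_two
  simpa [abs_of_pos (ha.trans hv)] using
    rpow_neg_four_mul_sq_add_sq_le (by linarith) (ha.trans hv).ne'

theorem intervalIntegrable_rpow_neg_four_mul_sq_add_sq_mul_inv_sqrt (hε : ε ≠ 0) {a b : ℝ}
    (ha : -(1 / 2) < a) (hab : a ≤ b) :
    IntervalIntegrable (fun v => (4 * v ^ 2 + ε ^ 2) ^ (-α) * (√(1 + 2 * v))⁻¹) volume a b :=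
  ((continuous_rpow_neg_four_mul_sq_add_sq hε).continuousOn.mul
    (continuousOn_inv_sqrt_one_add_two_mul.mono fun v hv => by
      rw [uIcc_of_le hab] at hv; exact ha.trans_le hv.1)).intervalIntegrable

theorem integral_rpow_neg_four_mul_sq_add_sq_mul_sub_one_add (hε : ε ≠ 0) :
    ∫ v in (-(3 / 8) : ℝ)..(3 / 8),
        (4 * v ^ 2 + ε ^ 2) ^ (-α) * ((√(1 + 2 * v))⁻¹ - 1 + v)
      = (∫ v in (-(3 / 8) : ℝ)..(3 / 8), (4 * v ^ 2 + ε ^ 2) ^ (-α) * (√(1 + 2 * v))⁻¹)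
        - ∫ v in (-(3 / 8) : ℝ)..(3 / 8), (4 * v ^ 2 + ε ^ 2) ^ (-α) := by
  have hf := continuous_rpow_neg_four_mul_sq_add_sq (α := α) hε
  have hfw := intervalIntegrable_rpow_neg_four_mul_sq_add_sq_mul_inv_sqrt (α := α) hε
    (a := -(3 / 8)) (b := 3 / 8) (by norm_num) (by norm_num)
  have hfv : Continuous fun v => (4 * v ^ 2 + ε ^ 2) ^ (-α) * v := hf.mul continuous_id
  have hodd := integral_mul_self_eq_zero_of_even
    (g := fun v => (4 * v ^ 2 + ε ^ 2) ^ (-α)) (fun v => by simp) (3 / 8)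
  calc _ = ∫ v in (-(3 / 8) : ℝ)..(3 / 8), ((4 * v ^ 2 + ε ^ 2) ^ (-α) * (√(1 + 2 * v))⁻¹
          - (4 * v ^ 2 + ε ^ 2) ^ (-α)) + (4 * v ^ 2 + ε ^ 2) ^ (-α) * v :=
        integral_congr fun v _ => by ring
    _ = _ := by
        rw [integral_add (hfw.sub (hf.intervalIntegrable _ _)) (hfv.intervalIntegrable _ _),
          integral_sub hfw (hf.intervalIntegrable _ _), hodd, add_zero]

theorem abs_integral_mul_inv_sqrt_sub_integral_le (hα : 1 / 2 < α) (hα' : α < 3 / 2)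
    (hε : 0 < ε) :
    |(∫ v in (-(3 / 8) : ℝ)..(5 / 8), (4 * v ^ 2 + ε ^ 2) ^ (-α) * (√(1 + 2 * v))⁻¹)
        - ∫ v, (4 * v ^ 2 + ε ^ 2) ^ (-α)|
      ≤ (∫ v in (-(3 / 8) : ℝ)..(3 / 8), 8 * 4 ^ (-α) * |v| ^ (2 - 2 * α))
        + (4 * (3 / 8) ^ 2) ^ (-α) * (5 / 8 - 3 / 8)
        + 2 * ∫ v in Ioi (3 / 8 : ℝ), 4 ^ (-α) * v ^ (-(2 * α)) := by
  have hsplit := integral_add_adjacent_intervals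
    (intervalIntegrable_rpow_neg_four_mul_sq_add_sq_mul_inv_sqrt (α := α) hε.ne'
      (a := -(3 / 8)) (b := 3 / 8) (by norm_num) (by norm_num))
    (intervalIntegrable_rpow_neg_four_mul_sq_add_sq_mul_inv_sqrt hε.ne'
      (a := 3 / 8) (b := 5 / 8) (by norm_num) (by norm_num))
  have hnear := abs_integral_rpow_neg_four_mul_sq_add_sq_mul_le (α := α) (ε := ε)
    (by linarith) hα'
  have hfar := abs_integral_rpow_neg_four_mul_sq_add_sq_mul_inv_sqrt_le (α := α) (ε := ε)
    (by linarith) (a := 3 / 8) (b := 5 / 8) (by norm_num) (by norm_num)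
  have htail := abs_integral_sub_intervalIntegral_rpow_neg_four_mul_sq_add_sq_le hα hε
    (a := 3 / 8) (by norm_num)
  rw [integral_rpow_neg_four_mul_sq_add_sq_mul_sub_one_add hε.ne'] at hnear
  rw [← hsplit, abs_le]
  rw [abs_le] at hnear hfar htail
  constructor <;> linarith

end

theorem singular_constant_asymptotics (α : ℝ) (hα : 1 / 2 < α ∧ α < 3 / 2) :
    ∃ M : ℝ, ∀ ε ∈ Set.Ioc (0 : ℝ) 1,
      |(∫ r in (1 / 2 : ℝ)..(3 / 2), ((1 - r ^ 2) ^ 2 + ε ^ 2) ^ (-α))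
        - (∫ t : ℝ, (4 * t ^ 2 + 1) ^ (-α)) * ε ^ (1 - 2 * α)| ≤ M := by
  obtain ⟨hα₁, hα₂⟩ := hα
  refine ⟨_, fun ε hε =>
    le_of_eq_of_le ?_ (abs_integral_mul_inv_sqrt_sub_integral_le hα₁ hα₂ hε.1)⟩
  rw [integral_rpow_neg_one_sub_sq_sq_add_sq hε.1.ne', integral_rpow_neg_four_mul_sq_add_sq hε.1]
end
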